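/- arXiv:1310.2118 — 2 statements merged into one kernel-verified Lean document; each statement's English description precedes it below -/
import Mathlib

section
/- Let T be a spanning tree of flow graph G with bottom-up numbering, and let u ≠ v be vertices with v ∈ loop(u) and d(v) > u. Then d(v) = d(u); that is, u and v have exactly the same proper dominators. -/
universe u

variable {V : Type u}

attribute [local instance] Classical.propDecidable

/-- A flow graph: a directed graph with arc relation `A` and start vertex `s`. -/
structure FlowGraph (V : Type u) where
  A : V → V → Prop
  s : V

namespace FlowGraph

/-- `p` is a (directed) path from `a` to `b`: a nonempty list of vertices starting at `a`,
ending at `b`, with consecutive vertices joined by arcs. -/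
def IsPath (G : FlowGraph V) (p : List V) (a b : V) : Prop :=
  p ≠ [] ∧ p.head? = some a ∧ p.getLast? = some b ∧ p.Chain' G.A

def Reach (G : FlowGraph V) (a b : V) : Prop := ∃ p, G.IsPath p a b

/-- `u` dominates `v`: every path from the start vertex `s` to `v` contains `u`. -/
def Dom (G : FlowGraph V) (u v : V) : Prop :=
  ∀ p, G.IsPath p G.s v → u ∈ p

/-- Acyclic: no cycle of more than one vertex, i.e. no two distinct mutually reachable
vertices. -/
def Acyclic (G : FlowGraph V) : Prop :=
  ∀ a b, a ≠ b → ¬ (G.Reach a b ∧ G.Reach b a)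

/-- A spanning tree of `G` rooted at `s`, given by a parent function: every non-root
vertex has a tree arc from its parent, and the parent chain of every vertex reaches `s`. -/
structure SpanningTree (G : FlowGraph V) where
  parent : V → V
  parent_arc : ∀ v, v ≠ G.s → G.A (parent v) v
  parent_root : parent G.s = G.s
  root_reach : ∀ v, Relation.ReflTransGen (fun a b => parent a = b) v G.s

/-- `u` is an ancestor of `v` in the tree `T` (reflexively). -/
def Anc {G : FlowGraph V} (T : SpanningTree G) (u v : V) : Prop :=
  Relation.ReflTransGen (fun a b => T.parent a = b) v u

/-- Replace occurrences of `v` by `x`. -/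
noncomputable def repl (v x a : V) : V := if a = v then x else a

/-- Contraction of vertex `v` into vertex `x`: every arc end equal to `v` is replaced by `x`. -/
noncomputable def contract (G : FlowGraph V) (v x : V) : FlowGraph V where
  A a b := ∃ a' b', G.A a' b' ∧ a = repl v x a' ∧ b = repl v x b'
  s := G.s

/-- `x ∈ loop(u)`: `x` is a descendant of `u` in `T` with a path from `x` to `u` in `G`
containing only descendants of `u` in `T`. -/
def InLoop (G : FlowGraph V) (T : SpanningTree G) (u x : V) : Prop :=
  Anc T u x ∧ ∃ p, G.IsPath p x u ∧ ∀ y ∈ p, Anc T u y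

/-- `d` is an immediate-dominator function for `G`: for each `v ≠ s`, `d v ≠ v` is a
dominator of `v` and every dominator of `v` other than `v` itself dominates `d v`. -/
def IsIdom (G : FlowGraph V) (d : V → V) : Prop :=
  ∀ v, v ≠ G.s → d v ≠ v ∧ G.Dom (d v) v ∧
    ∀ u, G.Dom u v → u ≠ v → G.Dom u (d v)

end FlowGraph

open FlowGraph

/-
With a bottom-up numbering every dominator of a vertex is a tree ancestor, hence
numbered at least as high. Since `v ∈ loop(u)`, there are paths `u → v` (down the tree) and
`v → u` (inside the loop) that only visit descendants of `u`, all numbered at most `u`. So a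
vertex `x > u` dominates `u` iff it dominates `v`: an `s`-path to one of them, extended by such a
path, must meet `x` before the extension. Every proper dominator of `u` exceeds `u`, and every
proper dominator of `v` is at least `d v > u`, so `u` and `v` have the same proper dominators,
and hence the same immediate dominator.
-/

namespace FlowGraph

variable {G : FlowGraph V}

theorem isPath_singleton (G : FlowGraph V) (a : V) : G.IsPath [a] a a :=
  ⟨List.cons_ne_nil a [], rfl, rfl, List.isChain_singleton a⟩

theorem IsPath.append {p q : List V} {a b c : V} (hp : G.IsPath p a b) (hq : G.IsPath q b c) :
    G.IsPath (p ++ q.tail) a c := by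
  obtain ⟨hp0, hph, hpl, hpc⟩ := hp
  obtain ⟨hq0, hqh, hql, hqc⟩ := hq
  obtain ⟨b, qt, rfl⟩ := List.exists_cons_of_ne_nil hq0
  obtain rfl : b = _ := by simpa using hqh
  refine ⟨by simp [hp0], by simp [List.head?_append, hph], ?_, ?_⟩
  · rcases qt with _ | ⟨c', qt⟩
    · simpa [hpl] using hql
    · simpa [List.getLast?_append] using hql
  · refine List.IsChain.append hpc hqc.tail fun x hx y hy => ?_
    obtain rfl : b = x := by simpa [hpl] using hx
    exact (List.isChain_cons.mp hqc).1 y hy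

theorem Dom.of_isPath {x w w' : V} {q : List V} (hx : G.Dom x w) (hq : G.IsPath q w' w)
    (hxq : x ∉ q.tail) : G.Dom x w' := fun _ hp =>
  (List.mem_append.mp (hx _ (hp.append hq))).resolve_right hxq

section SpanningTree

variable (T : SpanningTree G)

theorem exists_isPath_of_anc {u v : V} (h : Anc T u v) :
    ∃ p, G.IsPath p u v ∧ ∀ y ∈ p, Anc T u y ∧ Anc T y v := by
  induction h using Relation.ReflTransGen.head_induction_on with
  | refl =>
    refine ⟨[u], isPath_singleton G u, fun y hy => ?_⟩
    obtain rfl : y = u := List.mem_singleton.mp hy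
    exact ⟨.refl, .refl⟩
  | @head w c hwc hcu ih =>
    obtain ⟨p, hp, hmem⟩ := ih
    by_cases hw : w = G.s
    · obtain rfl : c = w := hwc.symm.trans (hw ▸ T.parent_root)
      exact ⟨p, hp, hmem⟩
    · have hcw : G.IsPath [c, w] c w :=
        ⟨List.cons_ne_nil _ _, rfl, rfl, List.isChain_pair.mpr (hwc ▸ T.parent_arc w hw)⟩
      refine ⟨p ++ [w], hp.append hcw, fun y hy => ?_⟩
      rcases List.mem_append.mp hy with hy | hy
      · exact ⟨(hmem y hy).1, .trans (.single hwc) (hmem y hy).2⟩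
      · obtain rfl : y = w := List.mem_singleton.mp hy
        exact ⟨.head hwc hcu, .refl⟩

theorem Dom.anc {x w : V} (h : G.Dom x w) : Anc T x w := by
  obtain ⟨p, hp, hmem⟩ := exists_isPath_of_anc T (T.root_reach w)
  exact (hmem x (h p hp)).2

variable [LinearOrder V] {T} (hbu : ∀ x, x ≠ G.s → x < T.parent x)
include hbu

theorem Anc.le {a b : V} (h : Anc T a b) : b ≤ a := by
  induction h with
  | refl => exact le_rfl
  | @tail m c _ hmc ih =>
    by_cases hm : m = G.s
    · rw [← hmc, hm, T.parent_root, ← hm]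
      exact ih
    · exact ih.trans (hmc ▸ hbu m hm).le

theorem le_root (x : V) : x ≤ G.s :=
  Anc.le hbu (T.root_reach x)

theorem Dom.le {x w : V} (h : G.Dom x w) : w ≤ x :=
  Anc.le hbu (h.anc T)

theorem Dom.lt {x w : V} (h : G.Dom x w) (hxw : x ≠ w) : w < x :=
  (h.le hbu).lt_of_ne' hxw

theorem dom_iff_dom_of_inLoop {u v x : V} (hloop : InLoop G T u v) (hux : u < x) :
    G.Dom x u ↔ G.Dom x v := by
  obtain ⟨huv, q, hq, hqu⟩ := hloop
  obtain ⟨r, hr, hru⟩ := exists_isPath_of_anc T huv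
  have avoid : ∀ p : List V, (∀ y ∈ p, Anc T u y) → x ∉ p.tail := fun p hp hx =>
    (Anc.le hbu (hp x (List.mem_of_mem_tail hx))).not_gt hux
  exact ⟨fun h => h.of_isPath hq (avoid q hqu),
    fun h => h.of_isPath hr (avoid r fun y hy => (hru y hy).1)⟩

theorem IsIdom.eq_of_forall_dom_ne_iff {d : V → V} (hd : G.IsIdom d) {u v : V}
    (hu : u ≠ G.s) (hv : v ≠ G.s) (h : ∀ x, (G.Dom x v ∧ x ≠ v) ↔ (G.Dom x u ∧ x ≠ u)) :
    d v = d u := by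
  obtain ⟨hdu_ne, hdu, hu_idom⟩ := hd u hu
  obtain ⟨hdv_ne, hdv, hv_idom⟩ := hd v hv
  have hvu := h (d v) |>.mp ⟨hdv, hdv_ne⟩
  have huv := h (d u) |>.mpr ⟨hdu, hdu_ne⟩
  exact le_antisymm ((hv_idom _ huv.1 huv.2).le hbu) ((hu_idom _ hvu.1 hvu.2).le hbu)

end SpanningTree

end FlowGraph

theorem stmt10_general [LinearOrder V] (G : FlowGraph V) (T : SpanningTree G)
    (hbu : ∀ x, x ≠ G.s → x < T.parent x)
    (d : V → V) (hd : G.IsIdom d)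
    (u v : V) (hloop : InLoop G T u v)
    (hdv : u < d v) :
    d v = d u ∧ ∀ x, (G.Dom x v ∧ x ≠ v) ↔ (G.Dom x u ∧ x ≠ u) := by
  have hvu : v ≤ u := Anc.le hbu hloop.1
  have hu : u ≠ G.s := (hdv.trans_le (le_root hbu (d v))).ne
  have hv : v ≠ G.s := ((hvu.trans_lt hdv).trans_le (le_root hbu (d v))).ne
  have same_dom : ∀ x, (G.Dom x v ∧ x ≠ v) ↔ (G.Dom x u ∧ x ≠ u) := by
    intro x
    constructor
    · rintro ⟨hx, hxv⟩
      have hux : u < x := hdv.trans_le (((hd v hv).2.2 x hx hxv).le hbu)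
      exact ⟨(dom_iff_dom_of_inLoop hbu hloop hux).mpr hx, hux.ne'⟩
    · rintro ⟨hx, hxu⟩
      have hux : u < x := hx.lt hbu hxu
      exact ⟨(dom_iff_dom_of_inLoop hbu hloop hux).mp hx, (hvu.trans_lt hux).ne'⟩
  exact ⟨hd.eq_of_forall_dom_ne_iff hbu hu hv same_dom, same_dom⟩

/-- If `u ≠ v`, `v ∈ loop(u)`, and `d v > u` (bottom-up numbering), then `d v = d u`:
`u` and `v` have exactly the same proper dominators. -/
theorem stmt10 [LinearOrder V] (G : FlowGraph V) (T : SpanningTree G)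
    (hreach : ∀ v, G.Reach G.s v)
    (hbu : ∀ x, x ≠ G.s → x < T.parent x)
    (d : V → V) (hd : G.IsIdom d)
    (u v : V) (huv : u ≠ v) (hloop : InLoop G T u v)
    (hdv : u < d v) :
    d v = d u ∧ ∀ x, (G.Dom x v ∧ x ≠ v) ↔ (G.Dom x u ∧ x ≠ u) :=
  stmt10_general G T hbu d hd u v hloop hdv
end

section
/- With G' constructed from G as in Ramalingam's streamlined transformation (delete all back arcs; for each u such that loop(u) and loop(h(u)) share a common non-head entry add arc (p(h(u)), u); for each non-head entry (v, w) add arc (v, u) where loop(u) is the largest loop entered by (v, w)), the graphs G and G' have exactly the same dominator relation: for all vertices x, y, x dominates y in G if and only if x dominates y in G'. -/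
universe u

variable {V : Type u}

attribute [local instance] Classical.propDecidable

open FlowGraph

/-- `(v, w)` is an entry to `loop(u)`: an arc with `w ∈ loop(u)` and `v ∉ loop(u)`. -/
def IsEntry (G : FlowGraph V) (T : SpanningTree G) (u v w : V) : Prop :=
  G.A v w ∧ InLoop G T u w ∧ ¬ InLoop G T u v

/-- Ramalingam's streamlined transformation: delete all back arcs; for each `u` such
that `loop(u)` and `loop(h(u))` have a common non-head entry `(v, w)`, add arc
`(p (h u), u)`; and for each non-head entry `(v, w)` into some loop, add arc `(v, u)`
where `loop(u)` is the largest loop with entry `(v, w)`. -/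
def ramalingam (G : FlowGraph V) (T : SpanningTree G) (h : V → Option V) : FlowGraph V where
  A a b :=
    (G.A a b ∧ ¬ (Anc T b a ∧ a ≠ b)) ∨
    (∃ hu v w, h b = some hu ∧ a = T.parent hu ∧
      IsEntry G T b v w ∧ w ≠ b ∧ IsEntry G T hu v w ∧ w ≠ hu) ∨
    (∃ w, (∃ u0, IsEntry G T u0 a w ∧ w ≠ u0) ∧ IsEntry G T b a w ∧
      ∀ u', IsEntry G T u' a w → ∀ x, InLoop G T u' x → InLoop G T b x)
  s := G.s

/-!
Both `G` and `G' = ramalingam G T h` contain every tree arc, and `x` dominates `y` iff `y` cannot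
be reached from `s` avoiding `x`; so it suffices to transfer paths avoiding `x`, and only targets
`u` strictly below `x` in `T` need work, since otherwise the tree path to `u` avoids `x`.

From `G'` to `G`: the added arc `(v, u)` of a non-head entry `(v, w)` of `loop(u)` is replaced by
that entry followed by a path inside `loop(u)`, which stays below `u` and so avoids `x`. For the
arc `(p(h u), u)`: if `h u` is an ancestor of `x`, the source `v` of the common entry `(v, w)` is
not below `h u`, so the tree path from `s` to `v`, the entry and a path inside `loop(u)` avoid
`x`; otherwise the tree arc `(p(h u), h u)` and the tree path down to `u` do.

From `G` to `G'`: along a `G`-path avoiding `x`, every head `u ≠ x` of a loop containing the current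
vertex stays reachable in `G'` avoiding `x`. When the path enters `loop(u)` by a non-head entry
`(v, w)`, let `loop(u₀)` be the largest loop it enters. If `u₀` is not an ancestor of `x`, the added
arc `(v, u₀)` and the tree path from `u₀` to `u` work. Otherwise take the largest `loop(z)` entered
by `(v, w)` with `z` strictly below `x`: the entry `(v, w)` also enters `loop(h z)`, so `h z` is an
ancestor of `x`, and the added arc `(p(h z), z)` is reached along the tree from `s`.
-/

namespace FlowGraph

section Reachability

variable {G : FlowGraph V} {P Q : V → Prop} {a b c : V}

def ReachWithin (G : FlowGraph V) (P : V → Prop) (a b : V) : Prop :=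
  P a ∧ Relation.ReflTransGen (fun c d => G.A c d ∧ P d) a b

namespace ReachWithin

lemma refl (ha : P a) : G.ReachWithin P a a := ⟨ha, .refl⟩

lemma tail (h : G.ReachWithin P a b) (hbc : G.A b c) (hc : P c) : G.ReachWithin P a c :=
  ⟨h.1, h.2.tail ⟨hbc, hc⟩⟩

lemma head (ha : P a) (hab : G.A a b) (h : G.ReachWithin P b c) : G.ReachWithin P a c :=
  ⟨ha, h.2.head ⟨hab, h.1⟩⟩

lemma trans (h₁ : G.ReachWithin P a b) (h₂ : G.ReachWithin P b c) : G.ReachWithin P a c :=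
  ⟨h₁.1, h₁.2.trans h₂.2⟩

lemma mono (h : G.ReachWithin P a b) (hPQ : ∀ c, P c → Q c) : G.ReachWithin Q a b :=
  ⟨hPQ a h.1, Relation.ReflTransGen.mono (fun _ _ hcd => ⟨hcd.1, hPQ _ hcd.2⟩) _ _ h.2⟩

end ReachWithin

theorem exists_isPath_iff_reachWithin :
    (∃ p, G.IsPath p a b ∧ ∀ c ∈ p, P c) ↔ G.ReachWithin P a b := by
  constructor
  · rintro ⟨_ | ⟨a', l⟩, ⟨hne, hhead, hlast, hchain⟩, hP⟩
    · exact absurd rfl hne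
    · obtain rfl : a' = a := Option.some.inj hhead
      obtain rfl : (a' :: l).getLast (List.cons_ne_nil _ _) = b := by
        rw [List.getLast?_eq_some_getLast (List.cons_ne_nil _ _)] at hlast
        exact Option.some.inj hlast
      refine ⟨hP a' List.mem_cons_self, List.relationReflTransGen_of_exists_isChain_cons l ?_ rfl⟩
      exact hchain.imp_of_mem_tail_imp fun _ d _ hd hcd => ⟨hcd, hP d (List.mem_of_mem_tail hd)⟩
  · rintro ⟨ha, hab⟩
    obtain ⟨l, hchain, hlast⟩ := List.exists_isChain_cons_of_relationReflTransGen hab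
    refine ⟨a :: l, ⟨List.cons_ne_nil _ _, rfl, ?_, hchain.imp fun _ _ h => h.1⟩, ?_⟩
    · rw [List.getLast?_eq_some_getLast (List.cons_ne_nil _ _), hlast]
    · exact hchain.induction P _ (fun _ _ h _ => h.2) (fun _ => ha)

theorem dom_iff_not_reachWithin {x y : V} : G.Dom x y ↔ ¬ G.ReachWithin (· ≠ x) G.s y := by
  simp only [Dom, ← exists_isPath_iff_reachWithin, not_exists, not_and, not_forall, not_not,
    exists_prop, exists_eq_right]

end Reachability

section Tree

variable {G : FlowGraph V} {T : SpanningTree G} {a b c u w : V}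

lemma anc_refl : Anc T a a := .refl

lemma Anc.trans (hab : Anc T a b) (hbc : Anc T b c) : Anc T a c :=
  Relation.ReflTransGen.trans hbc hab

lemma anc_parent : Anc T (T.parent a) a := .single rfl

lemma anc_root : Anc T G.s a := T.root_reach a

lemma anc_iff_exists_iterate : Anc T a b ↔ ∃ n, T.parent^[n] b = a := by
  constructor
  · intro hab
    induction hab with
    | refl => exact ⟨0, rfl⟩
    | tail _ hstep ih =>
      obtain ⟨n, hn⟩ := ih
      exact ⟨n + 1, by rw [Function.iterate_succ_apply', hn, hstep]⟩
  · rintro ⟨n, rfl⟩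
    induction n generalizing b with
    | zero => exact anc_refl
    | succ n ih => exact (ih (b := T.parent b)).trans anc_parent

lemma iterate_parent_eq_root_of_le {m n : ℕ} (hn : T.parent^[n] a = G.s) (hnm : n ≤ m) :
    T.parent^[m] a = G.s := by
  rw [← Nat.sub_add_cancel hnm, Function.iterate_add_apply, hn,
    Function.iterate_fixed T.parent_root]

lemma Anc.antisymm (hab : Anc T a b) (hba : Anc T b a) : a = b := by
  obtain ⟨m, rfl⟩ := anc_iff_exists_iterate.mp hab
  obtain ⟨n, hn⟩ := anc_iff_exists_iterate.mp hba
  rcases Nat.eq_zero_or_pos m with rfl | hm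
  · rfl
  obtain ⟨j, hj⟩ := anc_iff_exists_iterate.mp (anc_root (T := T) (a := b))
  have hcycle : Function.IsPeriodicPt T.parent (m + n) b := by
    rw [Function.IsPeriodicPt, Function.IsFixedPt, add_comm, Function.iterate_add_apply, hn]
  have hb : b = G.s := by
    rw [← (hcycle.mul_const j).eq]
    exact iterate_parent_eq_root_of_le hj (Nat.le_mul_of_pos_left j (by omega))
  subst hb
  exact Function.iterate_fixed T.parent_root m

lemma Anc.eq_root (h : Anc T a G.s) : a = G.s := h.antisymm anc_root

lemma eq_root_of_parent_eq (h : T.parent a = a) : a = G.s := by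
  obtain ⟨n, hn⟩ := anc_iff_exists_iterate.mp (anc_root (T := T) (a := a))
  rwa [Function.iterate_fixed h] at hn

lemma Anc.total (hac : Anc T a c) (hbc : Anc T b c) : Anc T a b ∨ Anc T b a :=
  (Relation.ReflTransGen.total_of_right_unique (fun _ _ _ h₁ h₂ => h₁.symm.trans h₂) hac hbc).symm

lemma exists_anc_forall_anc {S : Set V} (hS : S.Nonempty) (hSw : ∀ z ∈ S, Anc T z w) :
    ∃ u ∈ S, ∀ z ∈ S, Anc T u z := by
  obtain ⟨N, hN⟩ := anc_iff_exists_iterate.mp (anc_root (T := T) (a := w))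
  have hbound : ∀ z ∈ S, ∃ n ≤ N, T.parent^[n] w = z := by
    intro z hz
    obtain ⟨n, hn⟩ := anc_iff_exists_iterate.mp (hSw z hz)
    rcases le_total n N with hnN | hNn
    · exact ⟨n, hnN, hn⟩
    · exact ⟨N, le_rfl, hN.trans (hn ▸ iterate_parent_eq_root_of_le hN hNn).symm⟩
  obtain ⟨z₀, hz₀⟩ := hS
  obtain ⟨n₀, hn₀N, rfl⟩ := hbound z₀ hz₀
  set m := Nat.findGreatest (fun n => T.parent^[n] w ∈ S) N
  refine ⟨T.parent^[m] w, Nat.findGreatest_spec (P := fun n => T.parent^[n] w ∈ S) hn₀N hz₀,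
    fun z hz => ?_⟩
  obtain ⟨n, hnN, rfl⟩ := hbound z hz
  refine anc_iff_exists_iterate.mpr ⟨m - n, ?_⟩
  rw [← Function.iterate_add_apply, Nat.sub_add_cancel (Nat.le_findGreatest hnN hz)]

lemma reachWithin_of_anc {H : FlowGraph V} (hH : ∀ d, d ≠ G.s → H.A (T.parent d) d)
    (hub : Anc T u b) : H.ReachWithin (fun d => Anc T u d ∧ Anc T d b) u b := by
  induction hub using Relation.ReflTransGen.head_induction_on with
  | refl => exact .refl ⟨anc_refl, anc_refl⟩
  | @head b c hbc hcu ih =>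
    have ih' : H.ReachWithin (fun d => Anc T u d ∧ Anc T d b) u c :=
      ih.mono fun d hd => ⟨hd.1, hd.2.trans (hbc ▸ anc_parent)⟩
    by_cases hb : b = G.s
    · subst hb
      rw [T.parent_root] at hbc
      exact hbc ▸ ih'
    · subst hbc
      exact ih'.tail (hH b hb) ⟨Anc.trans hcu anc_parent, anc_refl⟩

end Tree

section Loops

variable {G : FlowGraph V} {T : SpanningTree G} {b u x y z : V}

lemma inLoop_iff : InLoop G T u x ↔ Anc T u x ∧ G.ReachWithin (Anc T u) x u :=
  and_congr_right' exists_isPath_iff_reachWithin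

lemma inLoop_self : InLoop G T u u := inLoop_iff.mpr ⟨anc_refl, .refl anc_refl⟩

lemma InLoop.trans (h₁ : InLoop G T u y) (h₂ : InLoop G T y z) : InLoop G T u z := by
  obtain ⟨huy, hyu⟩ := inLoop_iff.mp h₁
  obtain ⟨hyz, hzy⟩ := inLoop_iff.mp h₂
  exact inLoop_iff.mpr ⟨huy.trans hyz, (hzy.mono fun _ => huy.trans).trans hyu⟩

lemma InLoop.of_anc (hu : InLoop G T u b) (hy : InLoop G T y b) (huy : Anc T u y) :
    InLoop G T u y := by
  have htree := reachWithin_of_anc (H := G) (fun d hd => T.parent_arc d hd) (inLoop_iff.mp hy).1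
  exact inLoop_iff.mpr ⟨huy, (htree.mono fun _ hd => huy.trans hd.1).trans (inLoop_iff.mp hu).2⟩

end Loops

end FlowGraph

section Entries

variable {G : FlowGraph V} {T : SpanningTree G} {a b t u x : V}

lemma IsEntry.not_anc (he : IsEntry G T u a b) : ¬ Anc T u a := fun hua =>
  he.2.2 (inLoop_iff.mpr ⟨hua, .head hua he.1 (inLoop_iff.mp he.2.1).2⟩)

lemma IsEntry.reachWithin_ne (he : IsEntry G T u a b) (hux : ¬ Anc T u x)
    (ha : G.ReachWithin (· ≠ x) t a) : G.ReachWithin (· ≠ x) t u :=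
  (ha.tail he.1 fun hbx => hux (hbx ▸ he.2.1.1)).trans
    ((inLoop_iff.mp he.2.1).2.mono fun _ hd hdx => hux (hdx ▸ hd))

lemma IsEntry.exists_outermost (he : IsEntry G T t a b) :
    ∃ u, IsEntry G T u a b ∧ ∀ z, IsEntry G T z a b → Anc T u z ∧ InLoop G T u z := by
  obtain ⟨u, hu, hmin⟩ :=
    exists_anc_forall_anc (S := {z | IsEntry G T z a b}) ⟨t, he⟩ fun z hz => hz.2.1.1
  exact ⟨u, hu, fun z hz => ⟨hmin z hz, InLoop.of_anc hu.2.1 hz.2.1 (hmin z hz)⟩⟩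

end Entries

section Ramalingam

variable {G : FlowGraph V} {T : SpanningTree G} {h : V → Option V} {a b u u₀ x y : V}

lemma ramalingam_arc_of_not_anc (hab : G.A a b) (hba : ¬ Anc T b a) :
    (ramalingam G T h).A a b :=
  Or.inl ⟨hab, fun hh => hba hh.1⟩

lemma ramalingam_parent_arc (hb : b ≠ G.s) : (ramalingam G T h).A (T.parent b) b :=
  ramalingam_arc_of_not_anc (T.parent_arc b hb) fun hb' =>
    hb (eq_root_of_parent_eq (hb'.antisymm anc_parent).symm)

lemma reachWithin_of_ramalingam (hh : ∀ v u, h v = some u → Anc T u v) (hxs : x ≠ G.s)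
    (hy : (ramalingam G T h).ReachWithin (· ≠ x) G.s y) : G.ReachWithin (· ≠ x) G.s y := by
  obtain ⟨hs, hy⟩ := hy
  induction hy with
  | refl => exact .refl hs
  | @tail a b _ hab ih =>
    obtain ⟨hab, hbx⟩ := hab
    by_cases hxb : Anc T x b
    swap
    · exact (reachWithin_of_anc (fun d hd => T.parent_arc d hd) anc_root).mono
        fun d hd hdx => hxb (hdx ▸ hd.2)
    have hbx' : ¬ Anc T b x := fun hbx' => hbx (hbx'.antisymm hxb)
    rcases hab with ⟨hab, -⟩ | ⟨u, v, w, hbu, rfl, hent, -, hentu, -⟩ | ⟨w, -, hent, -⟩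
    · exact ih.tail hab hbx
    · have hub := hh b u hbu
      by_cases hux : Anc T u x
      · have hxv : ¬ Anc T x v := fun hxv => hentu.not_anc (hux.trans hxv)
        exact hent.reachWithin_ne hbx' <| (reachWithin_of_anc (fun d hd => T.parent_arc d hd)
          anc_root).mono fun d hd hdx => hxv (hdx ▸ hd.2)
      · have hxu : Anc T x u := (hxb.total hub).resolve_right hux
        have hus : u ≠ G.s := fun hus => hxs (hus ▸ hxu).eq_root
        exact (ih.tail (T.parent_arc u hus) fun hux' => hux (hux' ▸ anc_refl)).trans
          ((reachWithin_of_anc (fun d hd => T.parent_arc d hd) hub).mono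
            fun d hd hdx => hux (hdx ▸ hd.1))
    · exact hent.reachWithin_ne hbx' ih

lemma ramalingam_reachWithin_of_outermost_anc
    (hsome : ∀ v u, h v = some u → Anc T u v ∧ u ≠ v ∧ InLoop G T u v ∧
      ∀ u', Anc T u' v → u' ≠ v → InLoop G T u' v → Anc T u' u)
    (hnone : ∀ v, h v = none → ∀ u, ¬ (Anc T u v ∧ u ≠ v ∧ InLoop G T u v))
    (hxs : x ≠ G.s) (he : IsEntry G T u a b) (hbu : b ≠ u) (hxu : Anc T x u) (hux : x ≠ u)
    (he₀ : IsEntry G T u₀ a b)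
    (houter : ∀ z, IsEntry G T z a b → Anc T u₀ z ∧ InLoop G T u₀ z) (hu₀x : Anc T u₀ x) :
    (ramalingam G T h).ReachWithin (· ≠ x) G.s u := by
  obtain ⟨z, ⟨hez, hzu, hxz, hxz'⟩, hmin⟩ :=
    exists_anc_forall_anc (S := {z | IsEntry G T z a b ∧ Anc T z u ∧ Anc T x z ∧ x ≠ z})
      ⟨u, he, anc_refl, hxu, hux⟩ fun z hz => hz.2.1
  have hu₀z : u₀ ≠ z := fun hu₀z => hxz' (hxz.antisymm (hu₀z ▸ hu₀x))
  obtain ⟨hu₀z', hzloop⟩ := houter z hez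
  obtain ⟨z', hzz'⟩ : ∃ z', h z = some z' :=
    Option.ne_none_iff_exists'.mp fun hz => hnone z hz u₀ ⟨hu₀z', hu₀z, hzloop⟩
  obtain ⟨hz'z, hz'ne, hz'loop, hinner⟩ := hsome z z' hzz'
  have hbz' : InLoop G T z' b := hz'loop.trans hez.2.1
  have hez' : IsEntry G T z' a b := ⟨he.1, hbz', fun ha =>
    he₀.2.2 ((InLoop.of_anc he₀.2.1 hbz' (hinner u₀ hu₀z' hu₀z hzloop)).trans ha)⟩
  have hz'x : Anc T z' x := by
    rcases hxz.total hz'z with hxz'' | hz'x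
    · by_contra hz'x
      exact hz'ne <| hz'z.antisymm <|
        hmin z' ⟨hez', hz'z.trans hzu, hxz'', fun h' => hz'x (h' ▸ anc_refl)⟩
    · exact hz'x
  have hxp : ¬ Anc T x (T.parent z') := fun hxp => by
    have hz's : z' = G.s := eq_root_of_parent_eq ((hz'x.trans hxp).antisymm anc_parent).symm
    exact hxs ((hz'x.antisymm (hxp.trans anc_parent)).symm.trans hz's)
  have hb_ne : ∀ c, Anc T c u → b ≠ c := fun c hcu hbc =>
    hbu ((hbc ▸ hcu).antisymm he.2.1.1)
  have harc : (ramalingam G T h).A (T.parent z') z :=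
    Or.inr (Or.inl ⟨z', a, b, hzz', rfl, hez, hb_ne z hzu, hez', hb_ne z' (hz'z.trans hzu)⟩)
  have hto : (ramalingam G T h).ReachWithin (· ≠ x) G.s (T.parent z') :=
    (reachWithin_of_anc (fun _ => ramalingam_parent_arc) anc_root).mono
      fun d hd hdx => hxp (hdx ▸ hd.2)
  have hfrom : (ramalingam G T h).ReachWithin (· ≠ x) z u :=
    (reachWithin_of_anc (fun _ => ramalingam_parent_arc) hzu).mono
      fun d hd hdx => hxz' (hxz.antisymm (hdx ▸ hd.1 : Anc T z x))
  exact (hto.tail harc (Ne.symm hxz')).trans hfrom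

lemma ramalingam_reachWithin_of_isEntry
    (hsome : ∀ v u, h v = some u → Anc T u v ∧ u ≠ v ∧ InLoop G T u v ∧
      ∀ u', Anc T u' v → u' ≠ v → InLoop G T u' v → Anc T u' u)
    (hnone : ∀ v, h v = none → ∀ u, ¬ (Anc T u v ∧ u ≠ v ∧ InLoop G T u v))
    (hxs : x ≠ G.s) (ha : (ramalingam G T h).ReachWithin (· ≠ x) G.s a)
    (he : IsEntry G T u a b) (hux : u ≠ x) : (ramalingam G T h).ReachWithin (· ≠ x) G.s u := by
  by_cases hxu : Anc T x u
  swap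
  · exact (reachWithin_of_anc (fun _ => ramalingam_parent_arc) anc_root).mono
      fun d hd hdx => hxu (hdx ▸ hd.2)
  by_cases hbu : b = u
  · subst hbu
    exact ha.tail (ramalingam_arc_of_not_anc he.1 he.not_anc) hux
  obtain ⟨u₀, he₀, houter⟩ := he.exists_outermost
  by_cases hu₀x : Anc T u₀ x
  · exact ramalingam_reachWithin_of_outermost_anc hsome hnone hxs he hbu hxu (Ne.symm hux) he₀
      houter hu₀x
  · have harc : (ramalingam G T h).A a u₀ :=
      Or.inr (Or.inr ⟨b, ⟨u, he, hbu⟩, he₀, fun z hz _ hy => (houter z hz).2.trans hy⟩)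
    have htree : (ramalingam G T h).ReachWithin (· ≠ x) u₀ u :=
      (reachWithin_of_anc (fun _ => ramalingam_parent_arc) (houter u he).1).mono
        fun d hd hdx => hu₀x (hdx ▸ hd.1)
    exact (ha.tail harc htree.1).trans htree

lemma ramalingam_reachWithin_of_reachWithin
    (hsome : ∀ v u, h v = some u → Anc T u v ∧ u ≠ v ∧ InLoop G T u v ∧
      ∀ u', Anc T u' v → u' ≠ v → InLoop G T u' v → Anc T u' u)
    (hnone : ∀ v, h v = none → ∀ u, ¬ (Anc T u v ∧ u ≠ v ∧ InLoop G T u v))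
    (hy : G.ReachWithin (· ≠ x) G.s y) : (ramalingam G T h).ReachWithin (· ≠ x) G.s y := by
  obtain ⟨hs, hy⟩ := hy
  have hxs : x ≠ G.s := Ne.symm hs
  suffices hloops : y ≠ x ∧ ∀ u, InLoop G T u y → u ≠ x →
      (ramalingam G T h).ReachWithin (· ≠ x) G.s u from
    hloops.2 y inLoop_self hloops.1
  induction hy with
  | refl =>
    refine ⟨hs, fun u hu _ => ?_⟩
    rw [(inLoop_iff.mp hu).1.eq_root]
    exact .refl hs
  | @tail a b _ hab ih =>
    refine ⟨hab.2, fun u hu hux => ?_⟩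
    by_cases hua : InLoop G T u a
    · exact ih.2 u hua hux
    · exact ramalingam_reachWithin_of_isEntry hsome hnone hxs (ih.2 a inLoop_self ih.1)
        ⟨hab.1, hu, hua⟩ hux

end Ramalingam

theorem stmt16_general (G : FlowGraph V) (T : SpanningTree G)
    (h : V → Option V)
    (hsome : ∀ v u, h v = some u ↔
      (Anc T u v ∧ u ≠ v ∧ InLoop G T u v ∧
        ∀ u', Anc T u' v → u' ≠ v → InLoop G T u' v → Anc T u' u))
    (hnone : ∀ v, h v = none ↔ ∀ u, ¬ (Anc T u v ∧ u ≠ v ∧ InLoop G T u v)) :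
    ∀ x y, G.Dom x y ↔ (ramalingam G T h).Dom x y := by
  intro x y
  rw [dom_iff_not_reachWithin, dom_iff_not_reachWithin]
  exact not_congr
    ⟨ramalingam_reachWithin_of_reachWithin (fun v u => (hsome v u).mp) (fun v => (hnone v).mp),
      fun hy => reachWithin_of_ramalingam (fun v u hvu => ((hsome v u).mp hvu).1) (Ne.symm hy.1) hy⟩

/-- Ramalingam's streamlined transformation preserves the dominator relation. -/
theorem stmt16 [LinearOrder V] (G : FlowGraph V) (T : SpanningTree G)
    (hreach : ∀ v, G.Reach G.s v)
    (hanc : ∀ a b, Anc T a b → b ≤ a)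
    (hint : ∀ u x y, Anc T u x → x ≤ y → y ≤ u → Anc T u y)
    (hcross : ∀ x y, G.A x y → ¬ Anc T x y → ¬ Anc T y x → y < x)
    (h : V → Option V)
    (hsome : ∀ v u, h v = some u ↔
      (Anc T u v ∧ u ≠ v ∧ InLoop G T u v ∧
        ∀ u', Anc T u' v → u' ≠ v → InLoop G T u' v → Anc T u' u))
    (hnone : ∀ v, h v = none ↔ ∀ u, ¬ (Anc T u v ∧ u ≠ v ∧ InLoop G T u v)) :
    ∀ x y, G.Dom x y ↔ (ramalingam G T h).Dom x y :=
  stmt16_general G T h hsome hnone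
end
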